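/- Let n ≥ 2, let c : Fin n → ℝ have pairwise distinct entries, let s be the permutation of Fin n with c_{s_1} < ⋯ < c_{s_n}, let y : Fin n → ℝ satisfy y_i ≥ 0 for all i and Σ_i y_i ≤ 1, set λ = 1 − Σ_i y_i, and let 0 ≤ ε < 2. Suppose 1 ≤ y_{s_n} + ε/2. If w is feasible for the modified gradient redirection problem (w_i ≥ 0, Σ_i w_i = 1, Σ_i |w_i − y_i| + λ ≤ ε) and w_{s_n} < 1, then w is not optimal: the one-hot vector e_{s_n} is feasible and Σ_i c_i w_i < c_{s_n} = Σ_i c_i (e_{s_n})_i. -/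
import Mathlib


/-- **Exchange argument, first case of Lemma 1(a).** If `1 ≤ y (s last) + ε/2`,
then the one-hot vector at the strictly most valuable index `s last` is
feasible for the modified gradient redirection problem and strictly improves
any feasible `w` with `w (s last) < 1`. -/
theorem one_hot_exchange_improves
    (n : ℕ) (hn : 2 ≤ n) (c : Fin n → ℝ)
    (hc : Function.Injective c)
    (s : Equiv.Perm (Fin n))
    (hs : StrictMono (fun t => c (s t)))
    (y : Fin n → ℝ) (hy0 : ∀ i, 0 ≤ y i) (hy1 : ∑ i, y i ≤ 1)
    (ε : ℝ) (hε0 : 0 ≤ ε) (hε2 : ε < 2)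
    (hcase : 1 ≤ y (s ⟨n - 1, by omega⟩) + ε / 2)
    (w : Fin n → ℝ) (hw0 : ∀ i, 0 ≤ w i) (hw1 : ∑ i, w i = 1)
    (hwb : (∑ i, |w i - y i|) + (1 - ∑ i, y i) ≤ ε)
    (hwlt : w (s ⟨n - 1, by omega⟩) < 1) :
    ((∑ i, |(if i = s ⟨n - 1, by omega⟩ then (1 : ℝ) else 0) - y i|) +
        (1 - ∑ i, y i) ≤ ε) ∧
      (∑ i, c i * w i < c (s ⟨n - 1, by omega⟩)) ∧
      (c (s ⟨n - 1, by omega⟩) =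
        ∑ i, c i * (if i = s ⟨n - 1, by omega⟩ then (1 : ℝ) else 0)) := by
  set k : Fin n := s ⟨n - 1, by omega⟩ with hk
  have hyk1 : y k ≤ 1 :=
    le_trans (Finset.single_le_sum (fun i _ => hy0 i) (Finset.mem_univ k)) hy1
  have hmax : ∀ i, c i ≤ c k := by
    intro i
    have hle : s.symm i ≤ (⟨n - 1, by omega⟩ : Fin n) := by
      rw [Fin.le_def]; simp; omega
    have := hs.monotone hle
    simpa using this
  have hltmax : ∀ i, i ≠ k → c i < c k := by
    intro i hi
    have hne : s.symm i ≠ ⟨n - 1, by omega⟩ := by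
      intro h
      apply hi
      rw [hk, ← h, Equiv.apply_symm_apply]
    have hle : s.symm i ≤ (⟨n - 1, by omega⟩ : Fin n) := by
      rw [Fin.le_def]; simp; omega
    have hlt : s.symm i < ⟨n - 1, by omega⟩ := lt_of_le_of_ne hle hne
    have := hs hlt
    simpa using this
  refine ⟨?_, ?_, ?_⟩
  · -- feasibility
    have hsum : ∑ i, |(if i = k then (1 : ℝ) else 0) - y i|
        = (1 - y k) + (∑ i, y i - y k) := by
      rw [← Finset.add_sum_erase _ _ (Finset.mem_univ k)]
      congr 1
      · simp [abs_of_nonneg (sub_nonneg.mpr hyk1)]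
      · rw [Finset.sum_congr rfl (fun i hi => by
          rw [if_neg (Finset.ne_of_mem_erase hi), zero_sub, abs_neg,
            abs_of_nonneg (hy0 i)])]
        rw [Finset.sum_erase_eq_sub (Finset.mem_univ k)]
    rw [hsum]; linarith
  · -- strict improvement
    obtain ⟨j, hjk, hj0⟩ : ∃ j, j ≠ k ∧ 0 < w j := by
      by_contra h
      push_neg at h
      have : ∑ i, w i = w k := by
        apply Finset.sum_eq_single
        · intro i _ hi
          exact le_antisymm (h i hi) (hw0 i)
        · simp
      rw [hw1] at this
      linarith
    have hcj : c j < c k := hltmax j hjk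
    have h1 : ∑ i ∈ Finset.univ.erase j, c i * w i
        ≤ ∑ i ∈ Finset.univ.erase j, c k * w i := by
      apply Finset.sum_le_sum
      intro i _
      exact mul_le_mul_of_nonneg_right (hmax i) (hw0 i)
    have h2 : ∑ i ∈ Finset.univ.erase j, w i = 1 - w j := by
      rw [Finset.sum_erase_eq_sub (Finset.mem_univ j), hw1]
    have h3 : ∑ i, c i * w i = c j * w j + ∑ i ∈ Finset.univ.erase j, c i * w i :=
      (Finset.add_sum_erase _ _ (Finset.mem_univ j)).symm
    rw [h3]
    have h4 : ∑ i ∈ Finset.univ.erase j, c k * w i = c k * (1 - w j) := by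
      rw [← Finset.mul_sum, h2]
    nlinarith [hw0 j]
  · simp [Finset.sum_ite_eq', mul_comm]
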